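/- arXiv:1101.0112 — 3 statements merged into one kernel-verified Lean document; each statement's English description precedes it below -/
import Mathlib

section
/- Let P, Q, R be partial multivalued functions on Baire space and suppose P × P ≤ᶜ_W P. Then P ⊕ (Q × R) ≡ᶜ_W (P ⊕ Q) × (P ⊕ R). -/
namespace Weihrauch

/-- Baire space ℕ^ℕ. -/
abbrev Baire : Type := ℕ → ℕ

/-- The interleaving pairing homeomorphism ⟨p,q⟩. -/
def pair (p q : Baire) : Baire := fun n => if n % 2 = 0 then p (n / 2) else q (n / 2)

/-- First component of the interleaving pairing. -/
def left (z : Baire) : Baire := fun n => z (2 * n)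

/-- Second component of the interleaving pairing. -/
def right (z : Baire) : Baire := fun n => z (2 * n + 1)

/-- The sequence np = n,p(0),p(1),… . -/
def cons (n : ℕ) (p : Baire) : Baire := fun m => match m with
  | 0 => n
  | k + 1 => p k

/-- Drop the first entry of a sequence. -/
def tail (z : Baire) : Baire := fun n => z (n + 1)

/-- The constant zero sequence 0^ℕ. -/
def zero : Baire := fun _ => 0

/-- The constant one sequence 1^ℕ. -/
def one : Baire := fun _ => 1

/-- Partial multivalued functions on Baire space. -/
abbrev MV : Type := Baire → Set Baire

/-- The domain of a partial multivalued function. -/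
def dom (P : MV) : Set Baire := {x | (P x).Nonempty}

/-- Continuous Weihrauch reducibility P ≤ᶜ_W Q. -/
def CWle (P Q : MV) : Prop :=
  ∃ H K : Baire → Baire,
    ContinuousOn K (dom P) ∧
    (∀ x ∈ dom P, K x ∈ dom Q) ∧
    ContinuousOn H {z | ∃ x ∈ dom P, ∃ y ∈ Q (K x), z = pair x y} ∧
    (∀ x ∈ dom P, ∀ y ∈ Q (K x), H (pair x y) ∈ P x)

/-- Continuous Weihrauch equivalence P ≡ᶜ_W Q. -/
def CWequiv (P Q : MV) : Prop := CWle P Q ∧ CWle Q P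

/-- The infimum operation (P ⊕ Q)(⟨p,q⟩) = 0P(p) ∪ 1Q(q) for p ∈ dom P, q ∈ dom Q. -/
def oplus (P Q : MV) : MV := fun z =>
  {r | left z ∈ dom P ∧ right z ∈ dom Q ∧
       ((∃ s ∈ P (left z), r = cons 0 s) ∨ (∃ s ∈ Q (right z), r = cons 1 s))}

/-- The coproduct (P ∐ Q)(0p) = 0P(p), (P ∐ Q)(1p) = 1Q(p). -/
def coprod (P Q : MV) : MV := fun z =>
  {r | (z 0 = 0 ∧ ∃ s ∈ P (tail z), r = cons 0 s) ∨
       (z 0 = 1 ∧ ∃ s ∈ Q (tail z), r = cons 1 s)}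

/-- The product (P × Q)(⟨p,q⟩) = {⟨r,s⟩ | r ∈ P(p), s ∈ Q(q)}. -/
def prod (P Q : MV) : MV := fun z =>
  {r | ∃ s ∈ P (left z), ∃ t ∈ Q (right z), r = pair s t}

/-- A fixed finite tupling ⟨p₀,…,p_{n-1}⟩ of n sequences, by interleaving. -/
def ftup (n : ℕ) (f : ℕ → Baire) : Baire := fun m => f (m % n) (m / n)

/-- The i-th projection inverting `ftup n`: `fproj n i (ftup n f) = f i` for i < n. -/
def fproj (n i : ℕ) (z : Baire) : Baire := fun j => z (j * n + i)

/-- The finite parallelization P*, with P*(n⟨p₁,…,pₙ⟩) = {n⟨r₁,…,rₙ⟩ | rᵢ ∈ P(pᵢ)}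
for n ≥ 1 and P*(0p) = {0^ℕ}.  (Note every sequence is of the form `ftup n f`,
since `ftup n (fun i => fproj n i z) = z`.) -/
def fpar (P : MV) : MV := fun z =>
  {r | (z 0 = 0 ∧ r = zero) ∨
       (1 ≤ z 0 ∧ r 0 = z 0 ∧
        ∀ i < z 0, fproj (z 0) i (tail r) ∈ P (fproj (z 0) i (tail z)))}

/-- Countable tupling ⟨p₁,p₂,…⟩ via the pairing bijection ℕ×ℕ→ℕ
(the family is indexed by 0,1,2,…). -/
def ctup (f : ℕ → Baire) : Baire := fun m => f (Nat.unpair m).1 (Nat.unpair m).2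

/-- Projection inverting `ctup`: `cproj i (ctup f) = f i`. -/
def cproj (i : ℕ) (z : Baire) : Baire := fun j => z (Nat.pair i j)

/-- The 1-indexed component pᵢ of a countable tuple z = ⟨p₁,p₂,…⟩ (for i ≥ 1). -/
def comp (z : Baire) (i : ℕ) : Baire := cproj (i - 1) z

/-- LLPO_{n,1}: at most one pair (i,j) with pᵢ(j) ≠ 0 in the domain;
values are the i0^ℕ with 1 ≤ i ≤ n and pᵢ = 0^ℕ. -/
def LLPOn (n : ℕ) : MV := fun z =>
  {r | (∀ i j i' j', 1 ≤ i → 1 ≤ i' → comp z i j ≠ 0 → comp z i' j' ≠ 0 →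
          (i = i' ∧ j = j')) ∧
       ∃ i, 1 ≤ i ∧ i ≤ n ∧ comp z i = zero ∧ r = cons i zero}

/-- LLPO_{∞,m}: at most m pairs (i,j) with pᵢ(j) ≠ 0 in the domain;
values are the i0^ℕ with pᵢ = 0^ℕ. -/
def LLPOinf (m : ℕ) : MV := fun z =>
  {r | (∃ s : Finset (ℕ × ℕ), s.card ≤ m ∧ ∀ i j, 1 ≤ i → comp z i j ≠ 0 → (i, j) ∈ s) ∧
       ∃ i, 1 ≤ i ∧ comp z i = zero ∧ r = cons i zero}

/-- The sequence 0ⁿ10^ℕ. -/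
def zeros1 (n : ℕ) : Baire := fun m => if m = n then 1 else 0

/-- Σ_k^∞LLPO(⟨0^ℕ,p⟩) = LLPO_{∞,2}(p), Σ_k^∞LLPO(⟨0ⁿ10^ℕ,p⟩) = LLPO_{n,1}(p) for n ≥ k. -/
def SigmaLLPO (k : ℕ) : MV := fun z =>
  {r | (left z = zero ∧ r ∈ LLPOinf 2 (right z)) ∨
       (∃ n, k ≤ n ∧ left z = zeros1 n ∧ r ∈ LLPOn n (right z))}

/-- c_𝒜, with dom(c_𝒜) = {0^ℕ} and c_𝒜(0^ℕ) = 𝒜. -/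
def cA (A : Set Baire) : MV := fun z => {r | z = zero ∧ r ∈ A}

/-- d_𝒜, with dom(d_𝒜) = 𝒜 and d_𝒜(x) = {1^ℕ} for x ∈ 𝒜. -/
def dA (A : Set Baire) : MV := fun z => {r | z ∈ A ∧ r = one}

/-- Continuous Medvedev reducibility 𝒜 ≤ᶜ_M 𝒝. -/
def CMle (A B : Set Baire) : Prop :=
  ∃ H : Baire → Baire, ContinuousOn H B ∧ ∀ x ∈ B, H x ∈ A

/-- The Medvedev sum 𝒜 + 𝒝 = 0𝒜 ∪ 1𝒝. -/
def msum (A B : Set Baire) : Set Baire := (cons 0 '' A) ∪ (cons 1 '' B)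

/-- The Medvedev product 𝒜 × 𝒝 = {⟨p,q⟩ | p ∈ 𝒜, q ∈ 𝒝}. -/
def mprod (A B : Set Baire) : Set Baire := {z | ∃ p ∈ A, ∃ q ∈ B, z = pair p q}

end Weihrauch


open Weihrauch

namespace OplusDistribAux

lemma left_pair (p q : Baire) : left (pair p q) = p := by
  funext n; simp [left, pair, Nat.mul_mod_right, Nat.mul_div_cancel_left]

lemma right_pair (p q : Baire) : right (pair p q) = q := by
  funext n
  have h1 : (2 * n + 1) % 2 = 1 := by omega
  have h2 : (2 * n + 1) / 2 = n := by omega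
  simp [right, pair, h1, h2]

lemma continuous_left : Continuous (left : Baire → Baire) :=
  continuous_pi fun n => continuous_apply (2 * n)

lemma continuous_right : Continuous (right : Baire → Baire) :=
  continuous_pi fun n => continuous_apply (2 * n + 1)

lemma continuous_tail : Continuous (tail : Baire → Baire) :=
  continuous_pi fun n => continuous_apply (n + 1)

lemma continuous_cons (n : ℕ) : Continuous (cons n) := by
  apply continuous_pi
  intro m
  match m with
  | 0 => exact continuous_const
  | k + 1 => exact continuous_apply k

lemma continuous_pair2 {f g : Baire → Baire} (hf : Continuous f) (hg : Continuous g) :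
    Continuous (fun z => pair (f z) (g z)) := by
  apply continuous_pi
  intro n
  by_cases h : n % 2 = 0 <;> simp only [pair, h, if_true, if_false]
  · exact (continuous_apply (n / 2)).comp hf
  · exact (continuous_apply (n / 2)).comp hg

lemma continuousOn_pair2 {f g : Baire → Baire} {s : Set Baire}
    (hf : ContinuousOn f s) (hg : ContinuousOn g s) :
    ContinuousOn (fun z => pair (f z) (g z)) s := by
  intro x hx
  apply continuousWithinAt_pi.2
  intro n
  by_cases h : n % 2 = 0 <;> simp only [pair, h, if_true, if_false]
  · exact (continuous_apply (n / 2)).continuousAt.comp_continuousWithinAt (hf x hx)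
  · exact (continuous_apply (n / 2)).continuousAt.comp_continuousWithinAt (hg x hx)

lemma continuous_ite_coord {c : ℕ} {f g : Baire → Baire}
    (hf : Continuous f) (hg : Continuous g) :
    Continuous (fun z : Baire => if z c = 0 then f z else g z) := by
  apply continuous_pi
  intro n
  have key : (fun z : Baire => (if z c = 0 then f z else g z) n)
      = (fun p : ℕ × ℕ × ℕ => if p.1 = 0 then p.2.1 else p.2.2) ∘
        (fun z => (z c, f z n, g z n)) := by
    funext z; by_cases h : z c = 0 <;> simp [h]
  rw [key]
  exact continuous_of_discreteTopology.comp
    ((continuous_apply c).prodMk (((continuous_apply n).comp hf).prodMk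
      ((continuous_apply n).comp hg)))

lemma mem_dom_oplus {P Q : MV} {z : Baire} :
    z ∈ dom (oplus P Q) ↔ left z ∈ dom P ∧ right z ∈ dom Q := by
  constructor
  · rintro ⟨r, h1, h2, -⟩; exact ⟨h1, h2⟩
  · rintro ⟨⟨s, hs⟩, hq⟩
    exact ⟨cons 0 s, ⟨s, hs⟩, hq, Or.inl ⟨s, hs, rfl⟩⟩

lemma mem_dom_prod {P Q : MV} {z : Baire} :
    z ∈ dom (prod P Q) ↔ left z ∈ dom P ∧ right z ∈ dom Q := by
  constructor
  · rintro ⟨r, s, hs, t, ht, -⟩; exact ⟨⟨s, hs⟩, ⟨t, ht⟩⟩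
  · rintro ⟨⟨s, hs⟩, ⟨t, ht⟩⟩
    exact ⟨pair s t, s, hs, t, ht, rfl⟩

/-- Forward reduction: inner key map. -/
def K1 (x : Baire) : Baire :=
  pair (pair (left x) (left (right x))) (pair (left x) (right (right x)))

/-- Forward reduction: outer answer map. -/
def H1 (z : Baire) : Baire :=
  if z 1 = 0 then cons 0 (tail (left (right z)))
  else if z 3 = 0 then cons 0 (tail (right (right z)))
  else cons 1 (pair (tail (left (right z))) (tail (right (right z))))

/-- Backward reduction: inner key map, built from Kp. -/
def K2 (Kp : Baire → Baire) (x : Baire) : Baire :=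
  pair (Kp (pair (left (left x)) (left (right x)))) (pair (right (left x)) (right (right x)))

/-- Argument fed to Hp in the backward reduction. -/
def m2 (z : Baire) : Baire :=
  pair (pair (left (left (left z))) (left (right (left z)))) (tail (right z))

def br1 (Hp : Baire → Baire) (z : Baire) : Baire :=
  pair (cons 0 (left (Hp (m2 z)))) (cons 0 (right (Hp (m2 z))))

def br2 (z : Baire) : Baire :=
  pair (cons 1 (left (tail (right z)))) (cons 1 (right (tail (right z))))

/-- Backward reduction: outer answer map. -/
def H2 (Hp : Baire → Baire) (z : Baire) : Baire :=
  if z 1 = 0 then br1 Hp z else br2 z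

lemma continuous_K1 : Continuous K1 := by
  unfold K1
  exact continuous_pair2
    (continuous_pair2 continuous_left (continuous_left.comp continuous_right))
    (continuous_pair2 continuous_left (continuous_right.comp continuous_right))

lemma continuous_H1 : Continuous H1 := by
  unfold H1
  apply continuous_ite_coord
  · exact (continuous_cons 0).comp (continuous_tail.comp (continuous_left.comp continuous_right))
  · apply continuous_ite_coord
    · exact (continuous_cons 0).comp (continuous_tail.comp (continuous_right.comp continuous_right))
    · exact (continuous_cons 1).comp (continuous_pair2
        (continuous_tail.comp (continuous_left.comp continuous_right))
        (continuous_tail.comp (continuous_right.comp continuous_right)))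

lemma continuous_m2 : Continuous m2 := by
  unfold m2
  exact continuous_pair2
    (continuous_pair2 (continuous_left.comp (continuous_left.comp continuous_left))
      (continuous_left.comp (continuous_right.comp continuous_left)))
    (continuous_tail.comp continuous_right)

lemma continuous_br2 : Continuous br2 := by
  unfold br2
  exact continuous_pair2
    ((continuous_cons 1).comp (continuous_left.comp (continuous_tail.comp continuous_right)))
    ((continuous_cons 1).comp (continuous_right.comp (continuous_tail.comp continuous_right)))

end OplusDistribAux
namespace OplusDistribAux

lemma tail_cons (n : ℕ) (p : Baire) : tail (cons n p) = p := rfl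

lemma left_K1 (x : Baire) : left (K1 x) = pair (left x) (left (right x)) := by
  simp [K1, left_pair]

lemma right_K1 (x : Baire) : right (K1 x) = pair (left x) (right (right x)) := by
  simp [K1, right_pair]

lemma left_K2 (Kp : Baire → Baire) (x : Baire) :
    left (K2 Kp x) = Kp (pair (left (left x)) (left (right x))) := by
  simp [K2, left_pair]

lemma right_K2 (Kp : Baire → Baire) (x : Baire) :
    right (K2 Kp x) = pair (right (left x)) (right (right x)) := by
  simp [K2, right_pair]

lemma m2_pair (x y : Baire) :
    m2 (pair x y) = pair (pair (left (left x)) (left (right x))) (tail y) := by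
  simp [m2, left_pair, right_pair]

lemma H1_eval0 (x s v : Baire) : H1 (pair x (pair (cons 0 s) v)) = cons 0 s := by
  have h : pair x (pair (cons 0 s) v) 1 = 0 := rfl
  simp [H1, h, right_pair, left_pair, tail_cons]

lemma H1_eval10 (x s t : Baire) :
    H1 (pair x (pair (cons 1 s) (cons 0 t))) = cons 0 t := by
  have h1 : pair x (pair (cons 1 s) (cons 0 t)) 1 = 1 := rfl
  have h3 : pair x (pair (cons 1 s) (cons 0 t)) 3 = 0 := rfl
  simp [H1, h1, h3, right_pair, left_pair, tail_cons]

lemma H1_eval11 (x s t : Baire) :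
    H1 (pair x (pair (cons 1 s) (cons 1 t))) = cons 1 (pair s t) := by
  have h1 : pair x (pair (cons 1 s) (cons 1 t)) 1 = 1 := rfl
  have h3 : pair x (pair (cons 1 s) (cons 1 t)) 3 = 1 := rfl
  simp [H1, h1, h3, right_pair, left_pair, tail_cons]

lemma H2_eval0 (Hp : Baire → Baire) (x s : Baire) :
    H2 Hp (pair x (cons 0 s)) =
      pair (cons 0 (left (Hp (pair (pair (left (left x)) (left (right x))) s))))
           (cons 0 (right (Hp (pair (pair (left (left x)) (left (right x))) s)))) := by
  have h : pair x (cons 0 s) 1 = 0 := rfl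
  simp [H2, br1, h, m2_pair, tail_cons]

lemma H2_eval1 (Hp : Baire → Baire) (x s : Baire) :
    H2 Hp (pair x (cons 1 s)) = pair (cons 1 (left s)) (cons 1 (right s)) := by
  have h : pair x (cons 1 s) 1 = 1 := rfl
  simp [H2, br2, h, right_pair, tail_cons]

end OplusDistribAux

open OplusDistribAux

/-- If P × P ≤ᶜ_W P, then P ⊕ (Q × R) ≡ᶜ_W (P ⊕ Q) × (P ⊕ R). -/
theorem oplus_prod_distrib (P Q R : MV) (hP : CWle (prod P P) P) :
    CWequiv (oplus P (prod Q R)) (prod (oplus P Q) (oplus P R)) := by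
  constructor
  · -- forward: P ⊕ (Q × R) ≤ (P ⊕ Q) × (P ⊕ R)
    refine ⟨H1, K1, continuous_K1.continuousOn, ?_, continuous_H1.continuousOn, ?_⟩
    · intro x hx
      obtain ⟨hxP, hxQR⟩ := mem_dom_oplus.1 hx
      obtain ⟨hxQ, hxR⟩ := mem_dom_prod.1 hxQR
      rw [mem_dom_prod, left_K1, right_K1, mem_dom_oplus, mem_dom_oplus,
        left_pair, right_pair, left_pair, right_pair]
      exact ⟨⟨hxP, hxQ⟩, hxP, hxR⟩
    · intro x hx y hy
      obtain ⟨hxP, hxQR⟩ := mem_dom_oplus.1 hx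
      obtain ⟨u, hu, v, hv, rfl⟩ := hy
      rw [left_K1] at hu
      rw [right_K1] at hv
      obtain ⟨-, -, hu3⟩ := hu
      obtain ⟨-, -, hv3⟩ := hv
      simp only [left_pair, right_pair] at hu3 hv3
      rcases hu3 with ⟨s, hs, rfl⟩ | ⟨s, hs, rfl⟩
      · rw [H1_eval0]
        exact ⟨hxP, hxQR, Or.inl ⟨s, hs, rfl⟩⟩
      · rcases hv3 with ⟨t, ht, rfl⟩ | ⟨t, ht, rfl⟩
        · rw [H1_eval10]
          exact ⟨hxP, hxQR, Or.inl ⟨t, ht, rfl⟩⟩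
        · rw [H1_eval11]
          exact ⟨hxP, hxQR, Or.inr ⟨pair s t, ⟨s, hs, t, ht, rfl⟩, rfl⟩⟩
  · -- backward: (P ⊕ Q) × (P ⊕ R) ≤ P ⊕ (Q × R)
    obtain ⟨Hp, Kp, hKpc, hKpd, hHpc, hHpd⟩ := hP
    have domfacts : ∀ x ∈ dom (prod (oplus P Q) (oplus P R)),
        (left (left x) ∈ dom P ∧ right (left x) ∈ dom Q) ∧
        (left (right x) ∈ dom P ∧ right (right x) ∈ dom R) := fun x hx =>
      ⟨mem_dom_oplus.1 (mem_dom_prod.1 hx).1, mem_dom_oplus.1 (mem_dom_prod.1 hx).2⟩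
    have hmaps : ∀ x ∈ dom (prod (oplus P Q) (oplus P R)),
        pair (left (left x)) (left (right x)) ∈ dom (prod P P) := by
      intro x hx
      rw [mem_dom_prod, left_pair, right_pair]
      exact ⟨(domfacts x hx).1.1, (domfacts x hx).2.1⟩
    refine ⟨H2 Hp, K2 Kp, ?_, ?_, ?_, ?_⟩
    · -- continuity of K2
      show ContinuousOn (fun x => pair (Kp (pair (left (left x)) (left (right x))))
        (pair (right (left x)) (right (right x)))) _
      apply continuousOn_pair2
      · exact hKpc.comp
          (continuous_pair2 (continuous_left.comp continuous_left)
            (continuous_left.comp continuous_right)).continuousOn hmaps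
      · exact (continuous_pair2 (continuous_right.comp continuous_left)
          (continuous_right.comp continuous_right)).continuousOn
    · -- K2 maps domains
      intro x hx
      rw [mem_dom_oplus, left_K2, right_K2]
      constructor
      · exact hKpd _ (hmaps x hx)
      · rw [mem_dom_prod, left_pair, right_pair]
        exact ⟨(domfacts x hx).1.2, (domfacts x hx).2.2⟩
    · -- continuity of H2
      set S2 := {z | ∃ x ∈ dom (prod (oplus P Q) (oplus P R)),
        ∃ y ∈ oplus P (prod Q R) (K2 Kp x), z = pair x y} with hS2def
      have hm2maps : Set.MapsTo m2 (S2 ∩ {w : Baire | w 1 = 0})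
          {z | ∃ x ∈ dom (prod P P), ∃ y ∈ P (Kp x), z = pair x y} := by
        rintro z ⟨⟨x, hx, y, hy, rfl⟩, hz1⟩
        obtain ⟨-, -, hy3⟩ := hy
        rcases hy3 with ⟨s, hs, rfl⟩ | ⟨s, hs, rfl⟩
        · rw [m2_pair, tail_cons]
          refine ⟨pair (left (left x)) (left (right x)), hmaps x hx, s, ?_, rfl⟩
          rw [left_K2] at hs
          exact hs
        · exact absurd (show (1 : ℕ) = 0 from hz1) one_ne_zero
      intro w hw
      by_cases hc : w 1 = 0
      · have hUopen : IsOpen {z : Baire | z 1 = 0} :=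
          (continuous_apply 1).isOpen_preimage {0} (isOpen_discrete _)
        refine (continuousWithinAt_inter (hUopen.mem_nhds hc)).1 ?_
        refine ContinuousWithinAt.congr (f := br1 Hp) ?_ ?_ ?_
        · refine ContinuousOn.continuousWithinAt ?_ ⟨hw, hc⟩
          show ContinuousOn (fun z => pair (cons 0 (left (Hp (m2 z))))
            (cons 0 (right (Hp (m2 z))))) _
          have hHm : ContinuousOn (fun z => Hp (m2 z)) (S2 ∩ {w : Baire | w 1 = 0}) :=
            hHpc.comp continuous_m2.continuousOn hm2maps
          apply continuousOn_pair2
          · exact ((continuous_cons 0).comp continuous_left).comp_continuousOn hHm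
          · exact ((continuous_cons 0).comp continuous_right).comp_continuousOn hHm
        · intro y hy
          show H2 Hp y = br1 Hp y
          unfold H2
          rw [if_pos (show y 1 = 0 from hy.2)]
        · show H2 Hp w = br1 Hp w
          unfold H2
          rw [if_pos hc]
      · have hUopen : IsOpen {z : Baire | ¬ z 1 = 0} :=
          (continuous_apply 1).isOpen_preimage {0}ᶜ (isOpen_discrete _)
        refine (continuousWithinAt_inter (hUopen.mem_nhds hc)).1 ?_
        refine ContinuousWithinAt.congr (f := br2) ?_ ?_ ?_
        · exact continuous_br2.continuousWithinAt.mono (Set.inter_subset_right.trans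
            (Set.subset_univ _))
        · intro y hy
          show H2 Hp y = br2 y
          unfold H2
          rw [if_neg (show ¬ y 1 = 0 from hy.2)]
        · show H2 Hp w = br2 w
          unfold H2
          rw [if_neg hc]
    · -- correctness of H2
      intro x hx y hy
      obtain ⟨-, -, hy3⟩ := hy
      rcases hy3 with ⟨s, hs, rfl⟩ | ⟨s, hs, rfl⟩
      · rw [H2_eval0]
        rw [left_K2] at hs
        obtain ⟨a, ha, b, hb, hab⟩ := hHpd _ (hmaps x hx) s hs
        rw [left_pair] at ha
        rw [right_pair] at hb
        rw [hab, left_pair, right_pair]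
        exact ⟨cons 0 a, ⟨(domfacts x hx).1.1, (domfacts x hx).1.2, Or.inl ⟨a, ha, rfl⟩⟩,
          cons 0 b, ⟨(domfacts x hx).2.1, (domfacts x hx).2.2, Or.inl ⟨b, hb, rfl⟩⟩, rfl⟩
      · rw [right_K2] at hs
        obtain ⟨a, ha, b, hb, rfl⟩ := hs
        rw [left_pair] at ha
        rw [right_pair] at hb
        rw [H2_eval1, left_pair, right_pair]
        exact ⟨cons 1 a, ⟨(domfacts x hx).1.1, (domfacts x hx).1.2, Or.inr ⟨a, ha, rfl⟩⟩,
          cons 1 b, ⟨(domfacts x hx).2.1, (domfacts x hx).2.2, Or.inr ⟨b, hb, rfl⟩⟩, rfl⟩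
end

section
/- Let P, Q, R be partial multivalued functions on Baire space and suppose P × P ≤ᶜ_W P. Then P × (Q ⊕ R) ≡ᶜ_W (P × Q) ⊕ (P × R). -/
open Weihrauch

@[simp] lemma wl_left_pair (p q : Baire) : Weihrauch.left (pair p q) = p := by
  funext n
  show (if 2 * n % 2 = 0 then p (2 * n / 2) else q (2 * n / 2)) = p n
  rw [if_pos (by omega)]
  congr 1; omega

@[simp] lemma wl_right_pair (p q : Baire) : Weihrauch.right (pair p q) = q := by
  funext n
  show (if (2 * n + 1) % 2 = 0 then p ((2 * n + 1) / 2) else q ((2 * n + 1) / 2)) = q n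
  rw [if_neg (by omega)]
  congr 1; omega

@[simp] lemma wl_tail_cons (n : ℕ) (p : Baire) : tail (cons n p) = p := rfl

@[simp] lemma wl_cons_zero (n : ℕ) (p : Baire) : cons n p 0 = n := rfl

lemma wl_cont_left : Continuous Weihrauch.left :=
  continuous_pi fun n => continuous_apply (2 * n)
lemma wl_cont_right : Continuous Weihrauch.right :=
  continuous_pi fun n => continuous_apply (2 * n + 1)
lemma wl_cont_tail : Continuous tail :=
  continuous_pi fun n => continuous_apply (n + 1)

lemma wl_cont_pair {X : Type*} [TopologicalSpace X] {f g : X → Baire}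
    (hf : Continuous f) (hg : Continuous g) :
    Continuous fun x => pair (f x) (g x) := by
  apply continuous_pi
  intro n
  show Continuous fun x => if n % 2 = 0 then f x (n / 2) else g x (n / 2)
  by_cases h : n % 2 = 0
  · simpa [h, Function.comp_def] using (continuous_apply (n / 2)).comp hf
  · simpa [h, Function.comp_def] using (continuous_apply (n / 2)).comp hg

lemma wl_cont_cons {X : Type*} [TopologicalSpace X] {β : X → ℕ} {f : X → Baire}
    (hβ : Continuous β) (hf : Continuous f) :
    Continuous fun x => cons (β x) (f x) := by
  apply continuous_pi
  intro n
  cases n with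
  | zero => exact hβ
  | succ k => exact (continuous_apply k).comp hf

lemma wl_contOn_pair {S : Set Baire} {f g : Baire → Baire}
    (hf : ContinuousOn f S) (hg : ContinuousOn g S) :
    ContinuousOn (fun x => pair (f x) (g x)) S :=
  by have := (wl_cont_pair continuous_fst continuous_snd).comp_continuousOn (ContinuousOn.prodMk hf hg); exact this

lemma wl_contOn_cons {S : Set Baire} {β : Baire → ℕ} {f : Baire → Baire}
    (hβ : ContinuousOn β S) (hf : ContinuousOn f S) :
    ContinuousOn (fun x => cons (β x) (f x)) S :=
  by have := (wl_cont_cons continuous_fst continuous_snd).comp_continuousOn (ContinuousOn.prodMk hβ hf); exact this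

lemma wl_mem_dom_prod {A B : MV} {z : Baire} :
    z ∈ dom (prod A B) ↔ Weihrauch.left z ∈ dom A ∧ Weihrauch.right z ∈ dom B := by
  constructor
  · rintro ⟨w, s, hs, t, ht, rfl⟩
    exact ⟨⟨s, hs⟩, ⟨t, ht⟩⟩
  · rintro ⟨⟨s, hs⟩, ⟨t, ht⟩⟩
    exact ⟨pair s t, s, hs, t, ht, rfl⟩

lemma wl_mem_dom_oplus {A B : MV} {z : Baire} :
    z ∈ dom (oplus A B) ↔ Weihrauch.left z ∈ dom A ∧ Weihrauch.right z ∈ dom B := by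
  constructor
  · rintro ⟨w, h1, h2, _⟩
    exact ⟨h1, h2⟩
  · rintro ⟨⟨a, ha⟩, hB⟩
    exact ⟨cons 0 a, ⟨a, ha⟩, hB, Or.inl ⟨a, ha, rfl⟩⟩

/-- Auxiliary map used in the second reduction. -/
def wl_g (w : Baire) : Baire :=
  pair (pair (Weihrauch.left (Weihrauch.left (Weihrauch.left w)))
             (Weihrauch.left (Weihrauch.right (Weihrauch.left w))))
       (Weihrauch.left (Weihrauch.right w))

lemma wl_g_pair (x s t : Baire) :
    wl_g (pair x (pair s t)) =
      pair (pair (Weihrauch.left (Weihrauch.left x)) (Weihrauch.left (Weihrauch.right x))) s := by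
  simp [wl_g]

lemma wl_cont_g : Continuous wl_g :=
  wl_cont_pair
    (wl_cont_pair (wl_cont_left.comp (wl_cont_left.comp wl_cont_left))
      (wl_cont_left.comp (wl_cont_right.comp wl_cont_left)))
    (wl_cont_left.comp wl_cont_right)


/-- If P × P ≤ᶜ_W P, then P × (Q ⊕ R) ≡ᶜ_W (P × Q) ⊕ (P × R). -/
theorem prod_oplus_distrib (P Q R : MV) (hP : CWle (prod P P) P) :
    CWequiv (prod P (oplus Q R)) (oplus (prod P Q) (prod P R)) := by
  obtain ⟨H₀, K₀, hK₀c, hK₀d, hH₀c, hH₀⟩ := hP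
  constructor
  · -- P × (Q ⊕ R) ≤ (P × Q) ⊕ (P × R)
    refine ⟨fun w => pair (Weihrauch.left (tail (Weihrauch.right w)))
        (cons (Weihrauch.right w 0) (Weihrauch.right (tail (Weihrauch.right w)))),
      fun x => pair (pair (Weihrauch.left x) (Weihrauch.left (Weihrauch.right x)))
        (pair (Weihrauch.left x) (Weihrauch.right (Weihrauch.right x))),
      ?_, ?_, ?_, ?_⟩
    · exact (wl_cont_pair
        (wl_cont_pair wl_cont_left (wl_cont_left.comp wl_cont_right))
        (wl_cont_pair wl_cont_left (wl_cont_right.comp wl_cont_right))).continuousOn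
    · intro x hx
      rw [wl_mem_dom_prod] at hx
      obtain ⟨hxP, hxO⟩ := hx
      rw [wl_mem_dom_oplus] at hxO
      obtain ⟨hxQ, hxR⟩ := hxO
      rw [wl_mem_dom_oplus]
      simp only [wl_left_pair, wl_right_pair]
      rw [wl_mem_dom_prod, wl_mem_dom_prod]
      simp only [wl_left_pair, wl_right_pair]
      exact ⟨⟨hxP, hxQ⟩, hxP, hxR⟩
    · exact (wl_cont_pair (wl_cont_left.comp (wl_cont_tail.comp wl_cont_right))
        (wl_cont_cons ((continuous_apply 0).comp wl_cont_right)
          (wl_cont_right.comp (wl_cont_tail.comp wl_cont_right)))).continuousOn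
    · intro x hx y hy
      have hx' := hx
      rw [wl_mem_dom_prod] at hx'
      obtain ⟨hxP, hxO⟩ := hx'
      rw [wl_mem_dom_oplus] at hxO
      obtain ⟨hxQ, hxR⟩ := hxO
      obtain ⟨hd1, hd2, hcase⟩ := hy
      rcases hcase with ⟨s', hs', hyeq⟩ | ⟨s', hs', hyeq⟩
      · simp only [wl_left_pair] at hs'
        obtain ⟨s, hs, t, ht, rfl⟩ := hs'
        simp only [wl_left_pair, wl_right_pair] at hs ht
        subst hyeq
        simp only [wl_right_pair, wl_tail_cons, wl_left_pair, wl_cons_zero]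
        refine ⟨s, hs, cons 0 t, ⟨hxQ, hxR, Or.inl ⟨t, ht, rfl⟩⟩, rfl⟩
      · simp only [wl_right_pair] at hs'
        obtain ⟨s, hs, t, ht, rfl⟩ := hs'
        simp only [wl_left_pair, wl_right_pair] at hs ht
        subst hyeq
        simp only [wl_right_pair, wl_tail_cons, wl_left_pair, wl_cons_zero]
        refine ⟨s, hs, cons 1 t, ⟨hxQ, hxR, Or.inr ⟨t, ht, rfl⟩⟩, rfl⟩
  · -- (P × Q) ⊕ (P × R) ≤ P × (Q ⊕ R)
    have hmapPP : ∀ z ∈ dom (oplus (prod P Q) (prod P R)),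
        pair (Weihrauch.left (Weihrauch.left z)) (Weihrauch.left (Weihrauch.right z))
          ∈ dom (prod P P) := by
      intro z hz
      rw [wl_mem_dom_oplus] at hz
      obtain ⟨hz1, hz2⟩ := hz
      rw [wl_mem_dom_prod] at hz1 hz2
      rw [wl_mem_dom_prod]
      simp only [wl_left_pair, wl_right_pair]
      exact ⟨hz1.1, hz2.1⟩
    refine ⟨fun w => if w 3 = 0
        then cons 0 (pair (Weihrauch.left (H₀ (wl_g w)))
          (tail (Weihrauch.right (Weihrauch.right w))))
        else cons 1 (pair (Weihrauch.right (H₀ (wl_g w)))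
          (tail (Weihrauch.right (Weihrauch.right w)))),
      fun z => pair (K₀ (pair (Weihrauch.left (Weihrauch.left z))
          (Weihrauch.left (Weihrauch.right z))))
        (pair (Weihrauch.right (Weihrauch.left z)) (Weihrauch.right (Weihrauch.right z))),
      ?_, ?_, ?_, ?_⟩
    · refine wl_contOn_pair
        (hK₀c.comp ((wl_cont_pair (wl_cont_left.comp wl_cont_left)
          (wl_cont_left.comp wl_cont_right)).continuousOn) hmapPP)
        ((wl_cont_pair (wl_cont_right.comp wl_cont_left)
          (wl_cont_right.comp wl_cont_right)).continuousOn)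
    · intro z hz
      have hPP := hmapPP z hz
      rw [wl_mem_dom_oplus] at hz
      obtain ⟨hz1, hz2⟩ := hz
      rw [wl_mem_dom_prod] at hz1 hz2
      rw [wl_mem_dom_prod]
      simp only [wl_left_pair, wl_right_pair]
      refine ⟨hK₀d _ hPP, ?_⟩
      rw [wl_mem_dom_oplus]
      simp only [wl_left_pair, wl_right_pair]
      exact ⟨hz1.2, hz2.2⟩
    · -- continuity of H
      have hclopen : IsClopen {w : Baire | w 3 = 0} :=
        (isClopen_discrete ({0} : Set ℕ)).preimage (continuous_apply 3)
      have hmapsg : Set.MapsTo wl_g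
          {z | ∃ x ∈ dom (oplus (prod P Q) (prod P R)),
            ∃ y ∈ prod P (oplus Q R)
              (pair (K₀ (pair (Weihrauch.left (Weihrauch.left x))
                  (Weihrauch.left (Weihrauch.right x))))
                (pair (Weihrauch.right (Weihrauch.left x))
                  (Weihrauch.right (Weihrauch.right x)))), z = pair x y}
          {z | ∃ x ∈ dom (prod P P), ∃ y ∈ P (K₀ x), z = pair x y} := by
        rintro w ⟨x, hx, y, hy, rfl⟩
        obtain ⟨s, hs, t, ht, rfl⟩ := hy
        simp only [wl_left_pair] at hs
        exact ⟨_, hmapPP x hx, s, hs, wl_g_pair x s t⟩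
      have hcont0 : ContinuousOn (fun w => H₀ (wl_g w)) _ :=
        hH₀c.comp wl_cont_g.continuousOn hmapsg
      apply ContinuousOn.if
      · intro a ha
        have := ha.2
        rw [hclopen.frontier_eq] at this
        exact absurd this (Set.notMem_empty a)
      · refine ContinuousOn.mono ?_ Set.inter_subset_left
        exact wl_contOn_cons continuousOn_const
          (wl_contOn_pair (wl_cont_left.comp_continuousOn hcont0)
            ((wl_cont_tail.comp (wl_cont_right.comp wl_cont_right)).continuousOn))
      · refine ContinuousOn.mono ?_ Set.inter_subset_left
        exact wl_contOn_cons continuousOn_const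
          (wl_contOn_pair (wl_cont_right.comp_continuousOn hcont0)
            ((wl_cont_tail.comp (wl_cont_right.comp wl_cont_right)).continuousOn))
    · intro x hx y hy
      have hPP := hmapPP x hx
      have hx' := hx
      rw [wl_mem_dom_oplus] at hx'
      obtain ⟨hxl, hxr⟩ := hx'
      obtain ⟨s, hs, t', ht', rfl⟩ := hy
      simp only [wl_left_pair, wl_right_pair] at hs ht'
      obtain ⟨s₁, hs₁, s₂, hs₂, hEq⟩ := hH₀ _ hPP s hs
      simp only [wl_left_pair, wl_right_pair] at hs₁ hs₂
      obtain ⟨hQd, hRd, hcase⟩ := ht'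
      rcases hcase with ⟨u, hu, rfl⟩ | ⟨u, hu, rfl⟩
      · simp only [wl_left_pair] at hu
        have hcond : pair x (pair s (cons 0 u)) 3 = 0 := rfl
        simp only [hcond, if_pos]
        rw [wl_g_pair, hEq]
        simp only [wl_left_pair, wl_right_pair, wl_tail_cons]
        exact ⟨hxl, hxr, Or.inl ⟨pair s₁ u, ⟨s₁, hs₁, u, hu, rfl⟩, rfl⟩⟩
      · simp only [wl_right_pair] at hu
        have hcond : pair x (pair s (cons 1 u)) 3 = 1 := rfl
        simp only [hcond]
        rw [if_neg one_ne_zero]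
        rw [wl_g_pair, hEq]
        simp only [wl_left_pair, wl_right_pair, wl_tail_cons]
        exact ⟨hxl, hxr, Or.inr ⟨pair s₂ u, ⟨s₂, hs₂, u, hu, rfl⟩, rfl⟩⟩
end

section
/- Let P, Q be partial multivalued functions on Baire space. If P × Q ≤ᶜ_W P, then P × Q* ≤ᶜ_W P. (This is the star-induction axiom showing the continuous Weihrauch degrees with ∐, ×, * form a commutative Kleene algebra.) -/
open Weihrauch


namespace StarInd
open Weihrauch

/-! ### Basic pairing algebra -/

lemma left_pair (p q : Baire) : left (pair p q) = p := by
  funext n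
  have h1 : (2 * n) % 2 = 0 := by omega
  have h2 : (2 * n) / 2 = n := by omega
  simp [left, pair, h1, h2]

lemma right_pair (p q : Baire) : right (pair p q) = q := by
  funext n
  have h1 : (2 * n + 1) % 2 = 1 := by omega
  have h2 : (2 * n + 1) / 2 = n := by omega
  simp [right, pair, h1, h2]

lemma tail_cons (n : ℕ) (p : Baire) : tail (cons n p) = p := rfl

lemma cons_zero_zero : cons 0 zero = zero := by
  funext m; cases m <;> rfl

lemma mod_lem {n i : ℕ} (hi : i < n) (j : ℕ) : (j * n + i) % n = i := by
  rw [Nat.mul_comm, Nat.mul_add_mod]; exact Nat.mod_eq_of_lt hi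

lemma div_lem {n i : ℕ} (hi : i < n) (j : ℕ) : (j * n + i) / n = j := by
  rw [Nat.add_comm, Nat.add_mul_div_right _ _ (by omega : 0 < n),
    Nat.div_eq_of_lt hi, Nat.zero_add]

lemma fproj_if_eq {n k : ℕ} (hk : k < n) (t w : Baire) :
    fproj n k (fun m => if m % n = k then t (m / n) else w m) = t := by
  funext j
  show (if (j * n + k) % n = k then t ((j * n + k) / n) else w (j * n + k)) = t j
  rw [mod_lem hk, if_pos rfl, div_lem hk]

lemma fproj_if_ne {n k i : ℕ} (hi : i < n) (hik : i ≠ k) (t w : Baire) :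
    fproj n i (fun m => if m % n = k then t (m / n) else w m) = fproj n i w := by
  funext j
  show (if (j * n + i) % n = k then t ((j * n + i) / n) else w (j * n + i)) = _
  rw [mod_lem hi, if_neg hik]; rfl

/-! ### Continuity basics -/

lemma cont_left : Continuous left := continuous_pi fun n => continuous_apply (2 * n)
lemma cont_right : Continuous right := continuous_pi fun n => continuous_apply (2 * n + 1)

lemma cont_pair : Continuous (fun x : Baire × Baire => pair x.1 x.2) := by
  apply continuous_pi; intro n
  by_cases h : n % 2 = 0
  · simp only [pair, h, if_true]
    exact (continuous_apply (n / 2)).comp continuous_fst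
  · simp only [pair, h, if_false]
    exact (continuous_apply (n / 2)).comp continuous_snd

lemma contOn_pair {α : Type*} [TopologicalSpace α] {f g : α → Baire} {s : Set α}
    (hf : ContinuousOn f s) (hg : ContinuousOn g s) :
    ContinuousOn (fun a => pair (f a) (g a)) s :=
  cont_pair.comp_continuousOn (hf.prodMk hg)

lemma cont_cons (n : ℕ) : Continuous (cons n) := by
  apply continuous_pi; intro m
  cases m with
  | zero => exact continuous_const
  | succ k => exact continuous_apply k

/-! ### The iterated reduction -/

/-- The `k`-th component of the `Q*`-input inside `z` (an input to `P × Q*`),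
assuming the arity is `n`. -/
def qf (n : ℕ) (z : Baire) (k : ℕ) : Baire := fproj n k (tail (right z))

lemma cont_qf (n k : ℕ) : Continuous (fun z => qf n z k) :=
  continuous_pi fun j => continuous_apply (2 * (j * n + k + 1) + 1)

/-- The forward iteration: `Xs K₀ n z 0 = left z` and
`Xs K₀ n z (k+1) = K₀ ⟨Xs K₀ n z k, qf n z k⟩`. -/
def Xs (K₀ : Baire → Baire) (n : ℕ) (z : Baire) : ℕ → Baire
  | 0 => left z
  | k + 1 => K₀ (pair (Xs K₀ n z k) (qf n z k))

/-- The backward unwinding. -/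
def dn (H₀ K₀ : Baire → Baire) (n : ℕ) (z : Baire) : ℕ → Baire → Baire
  | 0, y => pair y zero
  | k + 1, y =>
      let v := H₀ (pair (pair (Xs K₀ n z k) (qf n z k)) y)
      let w := dn H₀ K₀ n z k (left v)
      pair (left w) (fun m => if m % n = k then right v (m / n) else right w m)

/-- The outer reduction's `K`. -/
def Kfun (K₀ : Baire → Baire) (z : Baire) : Baire := Xs K₀ (z 1) z (z 1)

/-- The outer reduction's `H`. -/
def Hfun (H₀ K₀ : Baire → Baire) (u : Baire) : Baire :=
  pair (left (dn H₀ K₀ (u 2) (left u) (u 2) (right u)))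
       (cons (u 2) (right (dn H₀ K₀ (u 2) (left u) (u 2) (right u))))

lemma Xs_succ (K₀ : Baire → Baire) (n : ℕ) (z : Baire) (k : ℕ) :
    Xs K₀ n z (k + 1) = K₀ (pair (Xs K₀ n z k) (qf n z k)) := rfl

lemma dn_succ (H₀ K₀ : Baire → Baire) (n : ℕ) (z : Baire) (k : ℕ) (y : Baire) :
    dn H₀ K₀ n z (k + 1) y =
      pair (left (dn H₀ K₀ n z k (left (H₀ (pair (pair (Xs K₀ n z k) (qf n z k)) y)))))
        (fun m => if m % n = k
          then right (H₀ (pair (pair (Xs K₀ n z k) (qf n z k)) y)) (m / n)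
          else right (dn H₀ K₀ n z k
            (left (H₀ (pair (pair (Xs K₀ n z k) (qf n z k)) y)))) m) := rfl

/-! ### Domain facts -/

variable {P Q : MV} {H₀ K₀ : Baire → Baire}

lemma mem_dom_prod {R T : MV} {z : Baire} :
    z ∈ dom (prod R T) ↔ left z ∈ dom R ∧ right z ∈ dom T := by
  constructor
  · rintro ⟨r, s, hs, t, ht, rfl⟩; exact ⟨⟨s, hs⟩, ⟨t, ht⟩⟩
  · rintro ⟨⟨s, hs⟩, ⟨t, ht⟩⟩; exact ⟨pair s t, s, hs, t, ht, rfl⟩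

lemma qf_dom {z : Baire} {n : ℕ}
    (hz : z ∈ dom (prod P (fpar Q))) (hzn : z 1 = n) {i : ℕ} (hi : i < n) :
    qf n z i ∈ dom Q := by
  have hzQ : right z ∈ dom (fpar Q) := (mem_dom_prod.mp hz).2
  obtain ⟨r, hr⟩ := hzQ
  have h0 : right z 0 = n := hzn
  rcases hr with ⟨h00, _⟩ | ⟨_, _, hall⟩
  · omega
  · refine ⟨fproj n i (tail r), ?_⟩
    have := hall i (by omega)
    rw [h0] at this
    exact this

lemma Xs_dom (hK₀d : ∀ x ∈ dom (prod P Q), K₀ x ∈ dom P)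
    {z : Baire} {n : ℕ} (hz : z ∈ dom (prod P (fpar Q))) (hzn : z 1 = n) :
    ∀ k, k ≤ n → Xs K₀ n z k ∈ dom P := by
  intro k
  induction k with
  | zero => intro _; exact (mem_dom_prod.mp hz).1
  | succ k ih =>
      intro hk
      refine hK₀d _ (mem_dom_prod.mpr ⟨?_, ?_⟩)
      · rw [left_pair]; exact ih (by omega)
      · rw [right_pair]; exact qf_dom hz hzn (by omega)

lemma pairXq_dom (hK₀d : ∀ x ∈ dom (prod P Q), K₀ x ∈ dom P)
    {z : Baire} {n : ℕ} (hz : z ∈ dom (prod P (fpar Q))) (hzn : z 1 = n)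
    {k : ℕ} (hk : k < n) :
    pair (Xs K₀ n z k) (qf n z k) ∈ dom (prod P Q) := by
  refine mem_dom_prod.mpr ⟨?_, ?_⟩
  · rw [left_pair]; exact Xs_dom hK₀d hz hzn k (by omega)
  · rw [right_pair]; exact qf_dom hz hzn hk

/-! ### Correctness of the unwinding -/

lemma dn_spec (hK₀d : ∀ x ∈ dom (prod P Q), K₀ x ∈ dom P)
    (hH₀ : ∀ x ∈ dom (prod P Q), ∀ y ∈ P (K₀ x), H₀ (pair x y) ∈ prod P Q x)
    {z : Baire} {n : ℕ} (hz : z ∈ dom (prod P (fpar Q))) (hzn : z 1 = n) :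
    ∀ k, k ≤ n → ∀ y ∈ P (Xs K₀ n z k),
      left (dn H₀ K₀ n z k y) ∈ P (left z) ∧
      ∀ i, i < k → fproj n i (right (dn H₀ K₀ n z k y)) ∈ Q (qf n z i) := by
  intro k
  induction k with
  | zero =>
      intro _ y hy
      refine ⟨?_, fun i hi => absurd hi (by omega)⟩
      show left (pair y zero) ∈ _
      rwa [left_pair]
  | succ k ih =>
      intro hk y hy
      have hx'dom : pair (Xs K₀ n z k) (qf n z k) ∈ dom (prod P Q) :=
        pairXq_dom hK₀d hz hzn (by omega)
      have hyK : y ∈ P (K₀ (pair (Xs K₀ n z k) (qf n z k))) := hy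
      obtain ⟨s, hs, t, ht, hvp⟩ := hH₀ _ hx'dom y hyK
      rw [left_pair] at hs
      rw [right_pair] at ht
      have hlv : left (H₀ (pair (pair (Xs K₀ n z k) (qf n z k)) y)) = s := by
        rw [hvp, left_pair]
      have hrv : right (H₀ (pair (pair (Xs K₀ n z k) (qf n z k)) y)) = t := by
        rw [hvp, right_pair]
      obtain ⟨hw1, hw2⟩ := ih (by omega) s hs
      rw [dn_succ, hlv, hrv]
      constructor
      · rwa [left_pair]
      · intro i hi
        rw [right_pair]
        rcases Nat.lt_succ_iff_lt_or_eq.mp hi with hik | hik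
        · rw [fproj_if_ne (by omega) (by omega)]
          exact hw2 i hik
        · subst hik
          rw [fproj_if_eq (by omega)]
          exact ht

/-! ### Continuity of the iteration and unwinding -/

lemma Xs_cont (hK₀c : ContinuousOn K₀ (dom (prod P Q)))
    (hK₀d : ∀ x ∈ dom (prod P Q), K₀ x ∈ dom P) (n : ℕ) :
    ∀ k, k ≤ n → ContinuousOn (fun z => Xs K₀ n z k)
      (dom (prod P (fpar Q)) ∩ {z | z 1 = n}) := by
  intro k
  induction k with
  | zero => intro _; exact cont_left.continuousOn
  | succ k ih =>
      intro hk
      have hinner : ContinuousOn (fun z => pair (Xs K₀ n z k) (qf n z k))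
          (dom (prod P (fpar Q)) ∩ {z | z 1 = n}) :=
        contOn_pair (ih (by omega)) (cont_qf n k).continuousOn
      exact hK₀c.comp hinner fun z hz => pairXq_dom hK₀d hz.1 hz.2 (by omega)

/-- The natural domain for the unwinding at stage `k`. -/
def Un (P Q : MV) (K₀ : Baire → Baire) (n k : ℕ) : Set Baire :=
  {u | left u ∈ dom (prod P (fpar Q)) ∧ left u 1 = n ∧
       right u ∈ P (Xs K₀ n (left u) k)}

lemma dn_cont (hK₀c : ContinuousOn K₀ (dom (prod P Q)))
    (hK₀d : ∀ x ∈ dom (prod P Q), K₀ x ∈ dom P)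
    (hH₀c : ContinuousOn H₀
      {w | ∃ x ∈ dom (prod P Q), ∃ y ∈ P (K₀ x), w = pair x y})
    (hH₀ : ∀ x ∈ dom (prod P Q), ∀ y ∈ P (K₀ x), H₀ (pair x y) ∈ prod P Q x)
    (n : ℕ) :
    ∀ k, k ≤ n → ContinuousOn (fun u => dn H₀ K₀ n (left u) k (right u))
      (Un P Q K₀ n k) := by
  intro k
  induction k with
  | zero =>
      intro _
      exact (contOn_pair cont_right.continuousOn continuous_const.continuousOn :
        ContinuousOn (fun u => pair (right u) zero) _)
  | succ k ih =>
      intro hk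
      -- the inner argument of H₀
      set g : Baire → Baire :=
        fun u => pair (pair (Xs K₀ n (left u) k) (qf n (left u) k)) (right u) with hg
      have hXc : ContinuousOn (fun u => Xs K₀ n (left u) k) (Un P Q K₀ n (k+1)) := by
        refine (Xs_cont hK₀c hK₀d n k (by omega)).comp cont_left.continuousOn ?_
        exact fun u hu => ⟨hu.1, hu.2.1⟩
      have hgc : ContinuousOn g (Un P Q K₀ n (k+1)) := by
        refine contOn_pair (contOn_pair hXc ?_) cont_right.continuousOn
        exact ((cont_qf n k).comp cont_left).continuousOn
      have hgm : Set.MapsTo g (Un P Q K₀ n (k+1))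
          {w | ∃ x ∈ dom (prod P Q), ∃ y ∈ P (K₀ x), w = pair x y} := by
        intro u hu
        exact ⟨pair (Xs K₀ n (left u) k) (qf n (left u) k),
          pairXq_dom hK₀d hu.1 hu.2.1 (by omega), right u, hu.2.2, rfl⟩
      have hvc : ContinuousOn (fun u => H₀ (g u)) (Un P Q K₀ n (k+1)) :=
        hH₀c.comp hgc hgm
      -- the recursive call
      have hmc : ContinuousOn (fun u => pair (left u) (left (H₀ (g u))))
          (Un P Q K₀ n (k+1)) :=
        contOn_pair cont_left.continuousOn (cont_left.comp_continuousOn hvc)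
      have hmm : Set.MapsTo (fun u => pair (left u) (left (H₀ (g u))))
          (Un P Q K₀ n (k+1)) (Un P Q K₀ n k) := by
        intro u hu
        have hx'dom : pair (Xs K₀ n (left u) k) (qf n (left u) k) ∈ dom (prod P Q) :=
          pairXq_dom hK₀d hu.1 hu.2.1 (by omega)
        obtain ⟨s, hs, t, ht, hvp⟩ := hH₀ _ hx'dom (right u) hu.2.2
        rw [left_pair] at hs
        refine ⟨?_, ?_, ?_⟩
        · rw [left_pair]; exact hu.1
        · rw [left_pair]; exact hu.2.1
        · rw [left_pair, right_pair, hg]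
          show left (H₀ (pair (pair (Xs K₀ n (left u) k) (qf n (left u) k)) (right u))) ∈ _
          rw [hvp, left_pair]; exact hs
      have hwc : ContinuousOn (fun u => dn H₀ K₀ n (left u) k (left (H₀ (g u))))
          (Un P Q K₀ n (k+1)) := by
        have := (ih (by omega)).comp hmc hmm
        refine this.congr fun u hu => ?_
        show dn H₀ K₀ n (left u) k (left (H₀ (g u))) =
          dn H₀ K₀ n (left (pair (left u) (left (H₀ (g u))))) k
            (right (pair (left u) (left (H₀ (g u)))))
        rw [left_pair, right_pair]
      -- assemble
      have htc : ContinuousOn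
          (fun u => (fun m => if m % n = k
            then right (H₀ (g u)) (m / n)
            else right (dn H₀ K₀ n (left u) k (left (H₀ (g u)))) m : Baire))
          (Un P Q K₀ n (k+1)) := by
        apply continuousOn_pi.mpr
        intro m
        by_cases hm : m % n = k
        · simp only [hm, if_true]
          exact (continuous_apply (m / n)).comp_continuousOn
            (cont_right.comp_continuousOn hvc)
        · simp only [hm, if_false]
          exact (continuous_apply m).comp_continuousOn
            (cont_right.comp_continuousOn hwc)
      have := contOn_pair (cont_left.comp_continuousOn hwc) htc
      refine this.congr fun u hu => ?_
      rw [dn_succ, hg]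
      rfl

/-! ### The pieces are clopen -/

lemma coord_nhds {x : Baire} (i : ℕ) : {z : Baire | z i = x i} ∈ nhds x := by
  have hopen : IsOpen {z : Baire | z i = x i} := by
    have : {z : Baire | z i = x i} = (fun z : Baire => z i) ⁻¹' {x i} := rfl
    rw [this]
    exact (isOpen_discrete _).preimage (continuous_apply i)
  exact hopen.mem_nhds rfl

end StarInd


/-- Star induction: if P × Q ≤ᶜ_W P then P × Q* ≤ᶜ_W P. This is the key axiom
showing that the continuous Weihrauch degrees with ∐, ×, * form a commutative
Kleene algebra. -/
theorem star_induction (P Q : MV) (h : CWle (prod P Q) P) :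
    CWle (prod P (fpar Q)) P := by
  obtain ⟨H₀, K₀, hK₀c, hK₀d, hH₀c, hH₀⟩ := h
  classical
  refine ⟨StarInd.Hfun H₀ K₀, StarInd.Kfun K₀, ?_, ?_, ?_, ?_⟩
  · -- continuity of K
    intro z₀ hz₀
    rw [← continuousWithinAt_inter (StarInd.coord_nhds (x := z₀) 1)]
    have hc := (StarInd.Xs_cont hK₀c hK₀d (z₀ 1) (z₀ 1) le_rfl).continuousWithinAt
      (x := z₀) ⟨hz₀, rfl⟩
    refine hc.congr (fun z hz => ?_) ?_
    · show StarInd.Kfun K₀ z = _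
      unfold StarInd.Kfun
      rw [hz.2]
    · rfl
  · -- K maps into dom P
    intro x hx
    exact StarInd.Xs_dom hK₀d hx rfl (x 1) le_rfl
  · -- continuity of H
    intro u₀ hu₀
    rw [← continuousWithinAt_inter (StarInd.coord_nhds (x := u₀) 2)]
    set n := u₀ 2 with hn
    have hsub : {z | ∃ x ∈ dom (prod P (fpar Q)), ∃ y ∈ P (StarInd.Kfun K₀ x), z = pair x y}
        ∩ {u : Baire | u 2 = u₀ 2} ⊆ StarInd.Un P Q K₀ n n := by
      rintro u ⟨⟨x, hx, y, hy, rfl⟩, hu2⟩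
      have hx1 : x 1 = n := by
        have : pair x y 2 = x 1 := by
          show (if 2 % 2 = 0 then x (2/2) else y (2/2)) = x 1
          norm_num
        rw [← this]; exact hu2
      refine ⟨?_, ?_, ?_⟩
      · rw [StarInd.left_pair]; exact hx
      · rw [StarInd.left_pair]; exact hx1
      · rw [StarInd.left_pair, StarInd.right_pair]
        have : StarInd.Kfun K₀ x = StarInd.Xs K₀ n x n := by
          unfold StarInd.Kfun; rw [hx1]
        rwa [this] at hy
    have hdc := ((StarInd.dn_cont hK₀c hK₀d hH₀c hH₀ n n le_rfl).mono hsub)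
    have hcont : ContinuousOn
        (fun u => pair (left (StarInd.dn H₀ K₀ n (left u) n (right u)))
          (cons n (right (StarInd.dn H₀ K₀ n (left u) n (right u)))))
        ({z | ∃ x ∈ dom (prod P (fpar Q)), ∃ y ∈ P (StarInd.Kfun K₀ x), z = pair x y}
          ∩ {u : Baire | u 2 = u₀ 2}) :=
      StarInd.contOn_pair (StarInd.cont_left.comp_continuousOn hdc)
        ((StarInd.cont_cons n).comp_continuousOn
          (StarInd.cont_right.comp_continuousOn hdc))
    have hu₀mem : u₀ ∈ {z | ∃ x ∈ dom (prod P (fpar Q)), ∃ y ∈ P (StarInd.Kfun K₀ x), z = pair x y}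
        ∩ {u : Baire | u 2 = u₀ 2} := ⟨hu₀, rfl⟩
    refine (hcont.continuousWithinAt hu₀mem).congr (fun u hu => ?_) ?_
    · show StarInd.Hfun H₀ K₀ u = _
      unfold StarInd.Hfun
      rw [hu.2]
    · show StarInd.Hfun H₀ K₀ u₀ = _
      unfold StarInd.Hfun
      rfl
  · -- correctness of H
    intro x hx y hy
    have hx1 : pair x y 2 = x 1 := by
      show (if 2 % 2 = 0 then x (2/2) else y (2/2)) = x 1
      norm_num
    have hyX : y ∈ P (StarInd.Xs K₀ (x 1) x (x 1)) := hy
    obtain ⟨hw1, hw2⟩ := StarInd.dn_spec hK₀d hH₀ hx rfl (x 1) le_rfl y hyX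
    have hH : StarInd.Hfun H₀ K₀ (pair x y) =
        pair (left (StarInd.dn H₀ K₀ (x 1) x (x 1) y))
          (cons (x 1) (right (StarInd.dn H₀ K₀ (x 1) x (x 1) y))) := by
      unfold StarInd.Hfun
      rw [hx1, StarInd.left_pair, StarInd.right_pair]
    rw [hH]
    refine ⟨left (StarInd.dn H₀ K₀ (x 1) x (x 1) y), hw1,
      cons (x 1) (right (StarInd.dn H₀ K₀ (x 1) x (x 1) y)), ?_, rfl⟩
    by_cases hx0 : x 1 = 0
    · left
      constructor
      · exact hx0
      · rw [hx0]
        show cons 0 (right (StarInd.dn H₀ K₀ (x 1) x 0 y)) = zero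
        show cons 0 (right (pair y zero)) = zero
        rw [StarInd.right_pair, StarInd.cons_zero_zero]
    · right
      have h0 : right x 0 = x 1 := rfl
      refine ⟨by omega, rfl, ?_⟩
      intro i hi
      have hi' : i < x 1 := by
        have : (right x) 0 = x 1 := rfl
        omega
      rw [StarInd.tail_cons]
      exact hw2 i hi'
end
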